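/- arXiv:1606.03792 — 4 statements merged into one kernel-verified Lean document; each statement's English description precedes it below -/
import Mathlib

section
/- Let C be a smooth convex body in ℝ^m with nonempty interior (every boundary point has a one-dimensional normal cone). Then C is strictly convex if and only if C has no non-exposed face (equivalently, every face of C is an exposed face). -/
/-- The normal cone of a convex set `C` at a point `x`. -/
def normalCone {m : ℕ} (C : Set (EuclideanSpace ℝ (Fin m))) (x : EuclideanSpace ℝ (Fin m)) :
    Set (EuclideanSpace ℝ (Fin m)) :=
  {u | ∀ y ∈ C, @inner ℝ _ _ u (y - x) ≤ 0}

/-!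
At a smooth boundary point `p` every normal vector is a multiple of a fixed nonzero one `u`, so
every linear functional maximised on `C` at `p` is constant on the exposed face
`E = {v ∈ C | ⟪u, v⟫ = max}` through `p`, hence maximised on all of `E`.

If `C` is strictly convex, a face meeting the interior is `C` itself, and any other face is a
single boundary point `x`; the exposed face of a nonzero normal at `x` is convex and misses the
interior, so it is `{x}`. Conversely, if `a • x + b • y` with `x ≠ y` lies on the boundary, the
exposed face `E` of a nonzero normal there contains `x` and `y`. An extreme point `p` of the
compact set `E` is a face of `C`, so `{p}` is exposed by some functional, which by smoothness is
maximised on all of `E`; thus `E = {p}`, contradicting `x ≠ y`.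
-/

open Set Filter Topology

theorem IsExtreme.eq_of_mem_interior {E : Type*} [AddCommGroup E] [Module ℝ E]
    [TopologicalSpace E] [ContinuousAdd E] [ContinuousSMul ℝ E] {C F : Set E} {x : E}
    (hF : IsExtreme ℝ C F) (hxF : x ∈ F) (hx : x ∈ interior C) : F = C := by
  refine hF.subset.antisymm fun y hy => ?_
  have hcont : Tendsto (fun t : ℝ => x + t • (x - y)) (𝓝[>] 0) (𝓝 x) := by
    have : Continuous fun t : ℝ => x + t • (x - y) := by fun_prop
    exact (this.tendsto' 0 x (by simp)).mono_left nhdsWithin_le_nhds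
  obtain ⟨t, hxt, ht : 0 < t⟩ :=
    ((hcont.eventually (isOpen_interior.mem_nhds hx)).and self_mem_nhdsWithin).exists
  have hseg : x ∈ openSegment ℝ y (x + t • (x - y)) := by
    refine ⟨t / (1 + t), 1 / (1 + t), by positivity, by positivity, by field_simp; ring, ?_⟩
    match_scalars <;> grind
  exact hF.left_mem_of_mem_openSegment hy (interior_subset hxt) hxF hseg

theorem StrictConvex.subsingleton_of_disjoint_interior {E : Type*} [AddCommGroup E]
    [Module ℝ E] [TopologicalSpace E] {C F : Set E} (hC : StrictConvex ℝ C) (hF : Convex ℝ F)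
    (hFC : F ⊆ C) (hFi : Disjoint F (interior C)) : F.Subsingleton := by
  intro x hx y hy
  by_contra hxy
  have hmid : (1 / 2 : ℝ) • x + (1 / 2 : ℝ) • y ∈ F :=
    hF hx hy (by norm_num) (by norm_num) (by norm_num)
  exact hFi.ne_of_mem hmid (hC (hFC hx) (hFC hy) hxy (by norm_num) (by norm_num) (by norm_num)) rfl

section Exposed

variable {E : Type*} [NormedAddCommGroup E] [NormedSpace ℝ E] {C : Set E} {l : StrongDual ℝ E}

theorem ContinuousLinearMap.toExposed_disjoint_interior (hl : l ≠ 0) :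
    Disjoint (l.toExposed C) (interior C) := by
  refine Set.disjoint_left.2 fun x hx hxi => hl ?_
  have hmax : IsMaxOn l C x := fun y hy => hx.2 y hy
  exact (hmax.isLocalMax (mem_interior_iff_mem_nhds.1 hxi)).hasFDerivAt_eq_zero l.hasFDerivAt

theorem ContinuousLinearMap.toExposed_subset_frontier (hl : l ≠ 0) :
    l.toExposed C ⊆ frontier C := fun _ hx =>
  ⟨subset_closure hx.1, (toExposed_disjoint_interior hl).notMem_of_mem_left hx⟩

theorem ContinuousLinearMap.toExposed_subset_toExposed_smul {x : E} {c : ℝ}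
    (hx : x ∈ l.toExposed C) (hcx : x ∈ (c • l).toExposed C) :
    l.toExposed C ⊆ (c • l).toExposed C := by
  intro y hy
  have hxy : l y = l x := (hx.2 y hy.1).antisymm (hy.2 x hx.1)
  refine ⟨hy.1, fun z hz => ?_⟩
  simpa [hxy] using hcx.2 z hz

theorem innerSL_ne_zero {F : Type*} [NormedAddCommGroup F] [InnerProductSpace ℝ F] {u : F}
    (hu : u ≠ 0) : innerSL ℝ u ≠ 0 := by
  rwa [← norm_ne_zero_iff, innerSL_apply_norm, norm_ne_zero_iff]

end Exposed

section NormalCone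

variable {m : ℕ} {C : Set (EuclideanSpace ℝ (Fin m))} {x u : EuclideanSpace ℝ (Fin m)}

theorem mem_normalCone_iff_mem_toExposed (hx : x ∈ C) :
    u ∈ normalCone C x ↔ x ∈ (innerSL ℝ u).toExposed C := by
  simp only [normalCone, inner_sub_right, tsub_le_iff_right, zero_add, mem_ofPred_eq,
    ContinuousLinearMap.toExposed, coe_innerSL_apply, hx, true_and]

theorem exists_ne_zero_mem_normalCone
    (h : Module.finrank ℝ (Submodule.span ℝ (normalCone C x)) = 1) :
    ∃ u ∈ normalCone C x, u ≠ 0 := by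
  by_contra! hzero
  rw [Submodule.span_eq_bot.2 hzero, finrank_bot] at h
  exact zero_ne_one h

theorem exists_smul_innerSL_eq_of_mem_normalCone
    (h : Module.finrank ℝ (Submodule.span ℝ (normalCone C x)) = 1) (hu : u ∈ normalCone C x)
    (hu0 : u ≠ 0) {l : StrongDual ℝ (EuclideanSpace ℝ (Fin m))} (hl : x ∈ l.toExposed C) :
    ∃ c : ℝ, c • innerSL ℝ u = l := by
  set w := (InnerProductSpace.toDual ℝ _).symm l
  have hlw : innerSL ℝ w = l := (InnerProductSpace.toDual ℝ _).apply_symm_apply l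
  have hw : w ∈ normalCone C x := (mem_normalCone_iff_mem_toExposed hl.1).2 (hlw ▸ hl)
  obtain ⟨c, hc⟩ := (finrank_eq_one_iff_of_nonzero' (⟨u, Submodule.subset_span hu⟩ :
    Submodule.span ℝ (normalCone C x)) (by simpa using hu0)).1 h ⟨w, Submodule.subset_span hw⟩
  refine ⟨c, ?_⟩
  have hcw : c • u = w := congrArg Subtype.val hc
  rw [← hlw, ← hcw, map_smulₛₗ, conj_trivial]

end NormalCone

section SmoothBody

variable {m : ℕ} {C : Set (EuclideanSpace ℝ (Fin m))}

theorem isExposed_of_isExtreme_of_strictConvex (hC : StrictConvex ℝ C)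
    (hsmooth : ∀ x ∈ frontier C, Module.finrank ℝ (Submodule.span ℝ (normalCone C x)) = 1)
    {F : Set (EuclideanSpace ℝ (Fin m))} (hFconv : Convex ℝ F) (hF : IsExtreme ℝ C F) :
    IsExposed ℝ C F := by
  by_cases hFi : Disjoint F (interior C)
  · obtain rfl | ⟨x, rfl⟩ :=
      (hC.subsingleton_of_disjoint_interior hFconv hF.subset hFi).eq_empty_or_singleton
    · exact isExposed_empty
    have hxC : x ∈ C := hF.subset rfl
    have hxfr : x ∈ frontier C := ⟨subset_closure hxC, hFi.notMem_of_mem_left rfl⟩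
    obtain ⟨u, hu, hu0⟩ := exists_ne_zero_mem_normalCone (hsmooth x hxfr)
    have hE : IsExposed ℝ C ((innerSL ℝ u).toExposed C) :=
      ContinuousLinearMap.toExposed.isExposed
    have hEx : (innerSL ℝ u).toExposed C = {x} :=
      (hC.subsingleton_of_disjoint_interior (hE.convex hC.convex) hE.subset
        (ContinuousLinearMap.toExposed_disjoint_interior (innerSL_ne_zero hu0))
        ).eq_singleton_of_mem ((mem_normalCone_iff_mem_toExposed hxC).1 hu)
    exact hEx ▸ hE
  · obtain ⟨x, hxF, hx⟩ := not_disjoint_iff.1 hFi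
    exact (hF.eq_of_mem_interior hxF hx).symm ▸ IsExposed.refl C

theorem toExposed_subsingleton_of_forall_isExposed (hcomp : IsCompact C)
    (hsmooth : ∀ x ∈ frontier C, Module.finrank ℝ (Submodule.span ℝ (normalCone C x)) = 1)
    (hfaces : ∀ F : Set (EuclideanSpace ℝ (Fin m)),
      Convex ℝ F → IsExtreme ℝ C F → IsExposed ℝ C F)
    {u : EuclideanSpace ℝ (Fin m)} (hu0 : u ≠ 0) : ((innerSL ℝ u).toExposed C).Subsingleton := by
  intro x hx y hy
  have hE : IsExposed ℝ C ((innerSL ℝ u).toExposed C) :=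
    ContinuousLinearMap.toExposed.isExposed
  obtain ⟨p, hp⟩ := (hE.isCompact hcomp).extremePoints_nonempty ⟨x, hx⟩
  obtain ⟨l, hl⟩ := hfaces {p} (convex_singleton p)
    (hE.isExtreme.trans (isExtreme_singleton.2 hp)) (singleton_nonempty p)
  have hpl : p ∈ l.toExposed C := hl.subset rfl
  have hpfr := ContinuousLinearMap.toExposed_subset_frontier (innerSL_ne_zero hu0) hp.1
  obtain ⟨c, rfl⟩ := exists_smul_innerSL_eq_of_mem_normalCone (hsmooth p hpfr)
    ((mem_normalCone_iff_mem_toExposed hp.1.1).2 hp.1) hu0 hpl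
  have hEp : (innerSL ℝ u).toExposed C ⊆ {p} :=
    hl ▸ ContinuousLinearMap.toExposed_subset_toExposed_smul hp.1 hpl
  exact (hEp hx).trans (hEp hy).symm

theorem strictConvex_of_forall_isExposed (hC : Convex ℝ C) (hcomp : IsCompact C)
    (hsmooth : ∀ x ∈ frontier C, Module.finrank ℝ (Submodule.span ℝ (normalCone C x)) = 1)
    (hfaces : ∀ F : Set (EuclideanSpace ℝ (Fin m)),
      Convex ℝ F → IsExtreme ℝ C F → IsExposed ℝ C F) :
    StrictConvex ℝ C := by
  intro x hx y hy hxy a b ha hb hab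
  by_contra hz
  have hzC := hC hx hy ha.le hb.le hab
  obtain ⟨u, hu, hu0⟩ := exists_ne_zero_mem_normalCone (hsmooth _ ⟨subset_closure hzC, hz⟩)
  have hE := (ContinuousLinearMap.toExposed.isExposed (l := innerSL ℝ u) (A := C)).isExtreme
  have hzE := (mem_normalCone_iff_mem_toExposed hzC).1 hu
  have hzxy : a • x + b • y ∈ openSegment ℝ x y := ⟨a, b, ha, hb, hab, rfl⟩
  exact hxy (toExposed_subsingleton_of_forall_isExposed hcomp hsmooth hfaces hu0
    (hE.left_mem_of_mem_openSegment hx hy hzE hzxy)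
    (hE.right_mem_of_mem_openSegment hx hy hzE hzxy))

end SmoothBody

theorem stmt5_general {m : ℕ} (C : Set (EuclideanSpace ℝ (Fin m))) (hC : Convex ℝ C)
    (hcomp : IsCompact C)
    (hsmooth : ∀ x ∈ frontier C,
      Module.finrank ℝ (Submodule.span ℝ (normalCone C x)) = 1) :
    StrictConvex ℝ C ↔ ∀ F : Set (EuclideanSpace ℝ (Fin m)),
      Convex ℝ F → IsExtreme ℝ C F → IsExposed ℝ C F :=
  ⟨fun hsc _ => isExposed_of_isExtreme_of_strictConvex hsc hsmooth,
    strictConvex_of_forall_isExposed hC hcomp hsmooth⟩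

/-- a smooth convex body `C` with nonempty interior (every boundary point has a
one-dimensional normal cone) is strictly convex iff every face of `C` is an exposed face. -/
theorem stmt5 {m : ℕ} (C : Set (EuclideanSpace ℝ (Fin m))) (hC : Convex ℝ C)
    (hcomp : IsCompact C) (hint : (interior C).Nonempty)
    (hsmooth : ∀ x ∈ frontier C,
      Module.finrank ℝ (Submodule.span ℝ (normalCone C x)) = 1) :
    StrictConvex ℝ C ↔ ∀ F : Set (EuclideanSpace ℝ (Fin m)),
      Convex ℝ F → IsExtreme ℝ C F → IsExposed ℝ C F :=
  stmt5_general C hC hcomp hsmooth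
end

section
/- Let C be a compact convex body in ℝ^m with nonempty interior and at least one proper exposed face. Then the intersection of all coatoms of the lattice of exposed faces of C is empty. -/
/-!
If a point `x` lay on every coatom, it would lie on the boundary, since every proper exposed face misses
the interior and is contained in a coatom (exposed faces strictly grow in dimension along strict
inclusions). Shoot the ray from `x` through an interior point `z` until it leaves the compact set
`C` at a boundary point `y`. A supporting hyperplane at `y` gives a proper exposed face through `y`,
hence a coatom through `y`; it also contains `x`, so by convexity it contains `z`, which is
interior: a contradiction.
-/

/-- A coatom of the lattice of exposed faces of `C`: an exposed face `F ≠ C` such that any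
exposed face containing it is `F` itself or `C`. -/
def IsCoatomExposedFace {m : ℕ} (C F : Set (EuclideanSpace ℝ (Fin m))) : Prop :=
  IsExposed ℝ C F ∧ F ≠ C ∧ ∀ G, IsExposed ℝ C G → F ⊆ G → G = F ∨ G = C

open Set Module Topology

section

variable {E : Type*} [NormedAddCommGroup E] [NormedSpace ℝ E] {C F G : Set E}

theorem StrongDual.eq_zero_of_forall_le_of_mem_interior {l : StrongDual ℝ E} {x : E}
    (hx : x ∈ interior C) (hmax : ∀ y ∈ C, l y ≤ l x) : l = 0 :=
  IsLocalMax.hasFDerivAt_eq_zero (Filter.mem_of_superset (mem_interior_iff_mem_nhds.1 hx) hmax)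
    l.hasFDerivAt

theorem IsExposed.disjoint_interior (hF : IsExposed ℝ C F) (hFC : F ≠ C) :
    Disjoint F (interior C) := by
  refine disjoint_left.2 fun x hxF hxC => hFC ?_
  obtain ⟨l, rfl⟩ := hF ⟨x, hxF⟩
  have hl : l = 0 := StrongDual.eq_zero_of_forall_le_of_mem_interior hxC hxF.2
  simp [hl]

theorem exists_isExposed_mem_ne_of_notMem_interior (hC : Convex ℝ C)
    (hint : (interior C).Nonempty) {y : E} (hyC : y ∈ C) (hy : y ∉ interior C) :
    ∃ G, IsExposed ℝ C G ∧ y ∈ G ∧ G ≠ C := by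
  obtain ⟨f, u, hf0, hfC, hfy⟩ := geometric_hahn_banach_of_nonempty_interior hC
    (convex_singleton y) (disjoint_singleton_right.2 hy) hint (singleton_nonempty y)
  have hmax : ∀ a ∈ C, f a ≤ f y := fun a ha => (hfC a ha).trans (hfy y rfl)
  refine ⟨f.toExposed C, ContinuousLinearMap.toExposed.isExposed, ⟨hyC, hmax⟩, fun hGC => ?_⟩
  obtain ⟨z, hz⟩ := hint
  have hzG : z ∈ f.toExposed C := by rw [hGC]; exact interior_subset hz
  exact hf0 (StrongDual.eq_zero_of_forall_le_of_mem_interior hz hzG.2)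

theorem IsCompact.exists_notMem_interior_mem_segment (hcomp : IsCompact C) {x z : E}
    (hzC : z ∈ C) (hxz : x ≠ z) : ∃ y ∈ C, y ∉ interior C ∧ z ∈ segment ℝ x y := by
  set φ : ℝ → E := ⇑(AffineMap.lineMap (k := ℝ) x z)
  have hφ : IsClosedEmbedding φ := by
    have : φ = (· + x) ∘ (· • (z - x)) := by
      ext t; simp [φ, AffineMap.lineMap_apply]
    rw [this]
    exact (Homeomorph.addRight x).isClosedEmbedding.comp
      (isClosedEmbedding_smul_left (sub_ne_zero.2 hxz.symm))
  have hT : IsCompact (φ ⁻¹' C) := hφ.isCompact_preimage hcomp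
  have h1T : (1 : ℝ) ∈ φ ⁻¹' C := by simpa [φ] using hzC
  set t₀ := sSup (φ ⁻¹' C)
  have ht₀ : 1 ≤ t₀ := le_csSup hT.bddAbove h1T
  refine ⟨φ t₀, hT.sSup_mem ⟨1, h1T⟩, fun hy => ?_, ?_⟩
  · have hnhds : ∀ᶠ t in 𝓝 t₀, φ t ∈ C := Filter.mem_of_superset
      (hφ.continuous.continuousAt.preimage_mem_nhds (isOpen_interior.mem_nhds hy))
      (preimage_mono interior_subset)
    obtain ⟨t, htC, ht₀t⟩ := (hnhds.and_frequently (frequently_gt_nhds t₀)).exists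
    exact (le_csSup hT.bddAbove htC).not_gt ht₀t
  · rw [segment_eq_image_lineMap]
    refine ⟨t₀⁻¹, ⟨by positivity, inv_le_one_of_one_le₀ ht₀⟩, ?_⟩
    simp [φ, inv_mul_cancel₀ (zero_lt_one.trans_le ht₀).ne']

theorem IsExposed.affineSpan_lt (hF : IsExposed ℝ G F) (hFne : F.Nonempty) (hFG : F ≠ G) :
    affineSpan ℝ F < affineSpan ℝ G := by
  obtain ⟨l, rfl⟩ := hF hFne
  obtain ⟨x₀, hx₀⟩ := hFne
  obtain ⟨y, hyG, hyF⟩ : ∃ y ∈ G, y ∉ {x ∈ G | ∀ y ∈ G, l y ≤ l x} :=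
    not_subset.1 fun h => hFG (Subset.antisymm (sep_subset _ _) h)
  have hlF : l '' {x ∈ G | ∀ y ∈ G, l y ≤ l x} = {l x₀} := by
    refine (eq_singleton_iff_unique_mem.2 ⟨mem_image_of_mem _ hx₀, ?_⟩)
    rintro _ ⟨x, hx, rfl⟩
    exact le_antisymm (hx₀.2 x hx.1) (hx.2 x₀ hx₀.1)
  refine (affineSpan_mono ℝ (sep_subset _ _)).lt_of_ne fun h => hyF ⟨hyG, fun w hw => ?_⟩
  have hy : l y ∈ (affineSpan ℝ {x ∈ G | ∀ y ∈ G, l y ≤ l x}).map (l : E →ₗ[ℝ] ℝ).toAffineMap :=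
    AffineSubspace.mem_map_of_mem _ (h ▸ subset_affineSpan ℝ G hyG)
  rw [AffineSubspace.map_span, LinearMap.coe_toAffineMap, ContinuousLinearMap.coe_coe, hlF,
    AffineSubspace.mem_affineSpan_singleton] at hy
  exact hy ▸ hx₀.2 w hw

theorem IsExposed.finrank_direction_lt [FiniteDimensional ℝ E] (hF : IsExposed ℝ C F)
    (hG : IsExposed ℝ C G) (hFne : F.Nonempty) (hFG : F ⊆ G) (hne : F ≠ G) :
    finrank ℝ (affineSpan ℝ F).direction < finrank ℝ (affineSpan ℝ G).direction :=
  Submodule.finrank_lt_finrank_of_lt <| AffineSubspace.direction_lt_of_nonempty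
    ((hF.mono hG.subset hFG).affineSpan_lt hFne hne) (hFne.mono (subset_affineSpan ℝ F))

end

theorem exists_isCoatomExposedFace_superset {m : ℕ} {C F : Set (EuclideanSpace ℝ (Fin m))}
    (hF : IsExposed ℝ C F) (hFne : F.Nonempty) (hFC : F ≠ C) :
    ∃ F', IsCoatomExposedFace C F' ∧ F ⊆ F' := by
  set d : Set (EuclideanSpace ℝ (Fin m)) → ℕ := fun G => finrank ℝ (affineSpan ℝ G).direction
  set S := {G | IsExposed ℝ C G ∧ F ⊆ G ∧ G ≠ C}
  have hbdd : BddAbove (d '' S) := ⟨_, forall_mem_image.2 fun G _ => Submodule.finrank_le _⟩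
  obtain ⟨G, ⟨hG, hFG, hGC⟩, hGmax⟩ :=
    Nat.sSup_mem (Nonempty.image d (⟨F, hF, subset_rfl, hFC⟩ : S.Nonempty)) hbdd
  refine ⟨G, ⟨hG, hGC, fun H hH hGH => or_iff_not_imp_right.2 fun hHC => ?_⟩, hFG⟩
  by_contra hHG
  have hlt : d G < d H := hG.finrank_direction_lt hH (hFne.mono hFG) hGH (Ne.symm hHG)
  have hle : d H ≤ sSup (d '' S) := le_csSup hbdd ⟨H, ⟨hH, hFG.trans hGH, hHC⟩, rfl⟩
  omega

/-- for a compact convex body `C` with nonempty interior having at least one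
proper exposed face, the intersection of all coatoms of the exposed-face lattice is empty. -/
theorem stmt6 {m : ℕ} (C : Set (EuclideanSpace ℝ (Fin m))) (hC : Convex ℝ C)
    (hcomp : IsCompact C) (hint : (interior C).Nonempty)
    (hproper : ∃ F, IsExposed ℝ C F ∧ F ≠ ∅ ∧ F ≠ C) :
    ⋂₀ {F | IsCoatomExposedFace C F} = ∅ := by
  refine eq_empty_of_forall_notMem fun x hx => ?_
  have hcoatom : ∀ {F}, IsCoatomExposedFace C F → Disjoint F (interior C) := fun hF =>
    hF.1.disjoint_interior hF.2.1
  obtain ⟨F, hF, hFne, hFC⟩ := hproper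
  obtain ⟨F₀, hF₀, -⟩ := exists_isCoatomExposedFace_superset hF (nonempty_iff_ne_empty.2 hFne) hFC
  obtain ⟨z, hz⟩ := hint
  have hxz : x ≠ z := fun hxz =>
    (hcoatom hF₀).notMem_of_mem_left (hx F₀ hF₀) (hxz ▸ hz)
  obtain ⟨y, hyC, hy, hzxy⟩ := hcomp.exists_notMem_interior_mem_segment (interior_subset hz) hxz
  obtain ⟨G, hG, hyG, hGC⟩ := exists_isExposed_mem_ne_of_notMem_interior hC ⟨z, hz⟩ hyC hy
  obtain ⟨G', hG', hGG'⟩ := exists_isCoatomExposedFace_superset hG ⟨y, hyG⟩ hGC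
  have hzG' : z ∈ G' := (hG'.1.convex hC).segment_subset (hx G' hG') (hGG' hyG) hzxy
  exact (hcoatom hG').notMem_of_mem_left hzG' hz
end

section
/- Let C ⊆ ℝ^m be a convex set and F ⊆ C a subset. Then F is a face of C if and only if F is a poonem of C, i.e., there exist sets F_0 ⊆ F_1 ⊆ ... ⊆ F_k with F_0 = F, F_k = C, and F_{i−1} an exposed face of F_i for i = 1, ..., k. -/
/-!
A nonempty proper face `F` of a convex set `C` has a point `x` in its relative interior, and `x`
is not in the relative interior of `C`: otherwise every point of `C` would be the endpoint of an
open segment in `C` through `x`, forcing `F = C`. Separating `x` from the relative interior of `C`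
inside the affine span of `C` gives a functional maximized on `C` at `x` but not constant on `C`.
Its set of maximizers is an exposed face `E` of `C` of strictly smaller dimension, and it contains
`F` because it is a face containing a relative interior point of `F`. Since `F` is a face of `E`,
induction on the dimension produces the chain. Conversely, exposed faces of convex sets are
convex faces, and a face of a face is a face.
-/

open Set Module Topology

section TopologicalVectorSpace

variable {E : Type*} [TopologicalSpace E] [AddCommGroup E] [Module ℝ E] [IsTopologicalAddGroup E]
  [ContinuousSMul ℝ E] {C : Set E} {x : E}

theorem exists_mem_openSegment_of_mem_interior (hx : x ∈ interior C) (y : E) :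
    ∃ z ∈ C, x ∈ openSegment ℝ y z := by
  have hev : ∀ᶠ t in 𝓝[>] (0 : ℝ), x + t • (x - y) ∈ C :=
    nhdsWithin_le_nhds <| ((Continuous.tendsto' (by fun_prop) 0 x (by simp)).eventually
      (mem_interior_iff_mem_nhds.1 hx))
  obtain ⟨t, htC, ht : 0 < t⟩ := (hev.and self_mem_nhdsWithin).exists
  refine ⟨_, htC, t / (1 + t), 1 / (1 + t), by positivity, by positivity, by field_simp; ring, ?_⟩
  match_scalars <;> field_simp; ring

theorem Convex.exists_le_and_lt_of_notMem_interior [LocallyConvexSpace ℝ E] (hC : Convex ℝ C)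
    (hint : (interior C).Nonempty) (hx : x ∉ interior C) :
    ∃ l : StrongDual ℝ E, (∀ y ∈ C, l y ≤ l x) ∧ ∃ y ∈ C, l y < l x := by
  obtain ⟨l, hl⟩ := geometric_hahn_banach_open_point hC.interior isOpen_interior hx
  refine ⟨l, fun y hy => ?_, hint.imp fun y hy => ⟨interior_subset hy, hl y hy⟩⟩
  have hy' : y ∈ closure (interior C) :=
    hC.closure_interior_eq_closure_of_nonempty_interior hint ▸ subset_closure hy
  exact closure_lt_subset_le l.continuous continuous_const (closure_mono hl hy')

end TopologicalVectorSpace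

section Poonem

variable {E : Type*} [TopologicalSpace E] [AddCommGroup E] [Module ℝ E] {C D F : Set E}

def IsPoonem (C F : Set E) : Prop :=
  ∃ (k : ℕ) (G : ℕ → Set E), G 0 = F ∧ G k = C ∧ (∀ i < k, G i ⊆ G (i + 1)) ∧
    ∀ i < k, IsExposed ℝ (G (i + 1)) (G i)

theorem IsPoonem.refl (C : Set E) : IsPoonem C C :=
  ⟨0, fun _ => C, rfl, rfl, by simp, by simp⟩

theorem IsPoonem.trans_isExposed (hF : IsPoonem D F) (hD : IsExposed ℝ C D) : IsPoonem C F := by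
  obtain ⟨k, G, hG0, hGk, hsub, hexp⟩ := hF
  have step : ∀ i < k + 1, (if i ≤ k then G i else C) ⊆ (if i + 1 ≤ k then G (i + 1) else C) ∧
      IsExposed ℝ (if i + 1 ≤ k then G (i + 1) else C) (if i ≤ k then G i else C) := by
    intro i hi
    rcases Nat.lt_succ_iff_lt_or_eq.1 hi with hi | rfl
    · simp [hi.le, Nat.succ_le_of_lt hi, hsub i hi, hexp i hi]
    · simp [hGk, hD.subset, hD]
  exact ⟨k + 1, fun i => if i ≤ k then G i else C, by simpa using hG0, by simp,
    fun i hi => (step i hi).1, fun i hi => (step i hi).2⟩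

theorem convex_and_isExtreme_of_isExposed_chain {G : ℕ → Set E} {k : ℕ}
    (hG : ∀ i < k, IsExposed ℝ (G (i + 1)) (G i)) (hconv : Convex ℝ (G k)) :
    Convex ℝ (G 0) ∧ IsExtreme ℝ (G k) (G 0) := by
  induction k with
  | zero => exact ⟨hconv, IsExtreme.refl ℝ _⟩
  | succ k ih =>
    have hk := hG k k.lt_succ_self
    obtain ⟨h0, hk0⟩ := ih (fun i hi => hG i (hi.trans k.lt_succ_self)) (hk.convex hconv)
    exact ⟨h0, hk.isExtreme.trans hk0⟩

theorem IsPoonem.convex_and_isExtreme (h : IsPoonem C F) (hC : Convex ℝ C) :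
    Convex ℝ F ∧ IsExtreme ℝ C F := by
  obtain ⟨k, G, rfl, rfl, -, hG⟩ := h
  exact convex_and_isExtreme_of_isExposed_chain hG hC

end Poonem

section NormedSpace

variable {V : Type*} [NormedAddCommGroup V] [NormedSpace ℝ V] {C F : Set V} {x y : V}

theorem intrinsicInterior_eq_image_interior_preimage (hx : x ∈ C) :
    intrinsicInterior ℝ C = (fun w : (affineSpan ℝ C).direction => (w : V) + x) ''
      interior ((fun w : (affineSpan ℝ C).direction => (w : V) + x) ⁻¹' C) := by
  have : Nonempty (affineSpan ℝ C) := ⟨⟨x, mem_affineSpan ℝ hx⟩⟩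
  let φ := Homeomorph.vaddConst (⟨x, mem_affineSpan ℝ hx⟩ : affineSpan ℝ C)
  have hφ : (fun w : (affineSpan ℝ C).direction => (w : V) + x) = Subtype.val ∘ φ := rfl
  rw [hφ, preimage_comp, ← φ.preimage_interior, image_comp, φ.image_preimage]
  rfl

theorem exists_mem_openSegment_of_mem_intrinsicInterior (hx : x ∈ intrinsicInterior ℝ C)
    (hy : y ∈ C) : ∃ z ∈ C, x ∈ openSegment ℝ y z := by
  have hxC := intrinsicInterior_subset hx
  let W := (affineSpan ℝ C).direction
  let ι : W →ᵃ[ℝ] V := (AffineEquiv.vaddConst ℝ x).toAffineMap.comp W.subtype.toAffineMap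
  rw [intrinsicInterior_eq_image_interior_preimage hxC] at hx
  obtain ⟨w, hw, hwx⟩ := hx
  let v : W :=
    ⟨y - x, AffineSubspace.vsub_mem_direction (mem_affineSpan ℝ hy) (mem_affineSpan ℝ hxC)⟩
  obtain ⟨u, hu, hwu⟩ := exists_mem_openSegment_of_mem_interior hw v
  have := image_openSegment ℝ ι v u ▸ mem_image_of_mem ι hwu
  refine ⟨ι u, hu, ?_⟩
  simpa [ι, v, hwx] using this

theorem Convex.exists_le_and_lt_of_notMem_intrinsicInterior [FiniteDimensional ℝ V]
    (hC : Convex ℝ C) (hx : x ∈ C) (hx' : x ∉ intrinsicInterior ℝ C) :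
    ∃ l : StrongDual ℝ V, (∀ y ∈ C, l y ≤ l x) ∧ ∃ y ∈ C, l y < l x := by
  let W := (affineSpan ℝ C).direction
  have hvsub : ∀ y ∈ C, y - x ∈ W := fun y hy =>
    AffineSubspace.vsub_mem_direction (mem_affineSpan ℝ hy) (mem_affineSpan ℝ hx)
  have hri := intrinsicInterior_eq_image_interior_preimage hx
  set D : Set W := (fun w : W => (w : V) + x) ⁻¹' C
  have hD : Convex ℝ D := (hC.translate_preimage_left x).linear_preimage W.subtype
  have hint : (interior D).Nonempty := by
    simpa [hri] using Set.Nonempty.intrinsicInterior hC ⟨x, hx⟩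
  have h0 : (0 : W) ∉ interior D := fun h0 => hx' (hri ▸ ⟨0, h0, zero_add x⟩)
  obtain ⟨f, hfD, w, hw, hfw⟩ := hD.exists_le_and_lt_of_notMem_interior hint h0
  obtain ⟨l, hlf, -⟩ := exists_extension_norm_eq W f
  have hl : ∀ w : W, l ((w : V) + x) = f w + l x := fun w => by rw [map_add, hlf]
  refine ⟨l, fun y hy => ?_, _, hw, by linarith [hl w, map_zero f]⟩
  have hyD : (⟨y - x, hvsub y hy⟩ : W) ∈ D := by simpa [D] using hy
  have hly := hl ⟨y - x, hvsub y hy⟩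
  rw [sub_add_cancel] at hly
  linarith [hfD _ hyD, map_zero f]

theorem ContinuousLinearMap.vectorSpan_toExposed_le_ker (l : StrongDual ℝ V) (C : Set V) :
    vectorSpan ℝ (l.toExposed C) ≤ LinearMap.ker (l : V →ₗ[ℝ] ℝ) := by
  rw [vectorSpan_def, Submodule.span_le]
  rintro _ ⟨a, ha, b, hb, rfl⟩
  simpa [sub_eq_zero] using le_antisymm (hb.2 a ha.1) (ha.2 b hb.1)

theorem IsExtreme.exists_isExposed_vectorSpan_lt [FiniteDimensional ℝ V] (hC : Convex ℝ C)
    (hF : Convex ℝ F) (hFC : IsExtreme ℝ C F) (hne : F.Nonempty) (hFC' : F ≠ C) :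
    ∃ E, IsExposed ℝ C E ∧ F ⊆ E ∧ vectorSpan ℝ E < vectorSpan ℝ C := by
  obtain ⟨x, hx⟩ := hne.intrinsicInterior hF
  have hxF := intrinsicInterior_subset hx
  have hxriC : x ∉ intrinsicInterior ℝ C := fun hxriC => hFC' <| hFC.subset.antisymm fun y hy => by
    obtain ⟨z, hz, hyz⟩ := exists_mem_openSegment_of_mem_intrinsicInterior hxriC hy
    exact hFC.left_mem_of_mem_openSegment hy hz hxF hyz
  obtain ⟨l, hle, y₀, hy₀, hlt⟩ :=
    hC.exists_le_and_lt_of_notMem_intrinsicInterior (hFC.subset hxF) hxriC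
  have hxE : x ∈ l.toExposed C := ⟨hFC.subset hxF, hle⟩
  refine ⟨l.toExposed C, ContinuousLinearMap.toExposed.isExposed, fun y hy => ?_, ?_⟩
  · obtain ⟨z, hz, hyz⟩ := exists_mem_openSegment_of_mem_intrinsicInterior hx hy
    exact ContinuousLinearMap.toExposed.isExposed.isExtreme.left_mem_of_mem_openSegment
      (hFC.subset hy) (hFC.subset hz) hxE hyz
  refine (vectorSpan_mono ℝ (sep_subset _ _)).lt_of_not_ge fun hCE => hlt.ne ?_
  have := l.vectorSpan_toExposed_le_ker C (hCE (vsub_mem_vectorSpan ℝ hy₀ hxE.1))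
  simpa [sub_eq_zero] using this

theorem IsExtreme.isPoonem [FiniteDimensional ℝ V] (hC : Convex ℝ C) (hF : Convex ℝ F)
    (hFC : IsExtreme ℝ C F) : IsPoonem C F := by
  induction hn : finrank ℝ (vectorSpan ℝ C) using Nat.strong_induction_on generalizing C with
  | _ n ih =>
  obtain rfl | hne := F.eq_empty_or_nonempty
  · exact (IsPoonem.refl ∅).trans_isExposed isExposed_empty
  obtain rfl | hFC' := eq_or_ne F C
  · exact .refl F
  obtain ⟨E, hE, hFE, hlt⟩ := hFC.exists_isExposed_vectorSpan_lt hC hF hne hFC'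
  exact (ih _ (hn ▸ Submodule.finrank_lt_finrank_of_lt hlt) (hE.convex hC)
    (hFC.mono hE.subset hFE) rfl).trans_isExposed hE

end NormedSpace

theorem stmt10_general {m : ℕ} (C : Set (EuclideanSpace ℝ (Fin m))) (hC : Convex ℝ C)
    (F : Set (EuclideanSpace ℝ (Fin m))) :
    (Convex ℝ F ∧ IsExtreme ℝ C F) ↔
      ∃ (k : ℕ) (G : ℕ → Set (EuclideanSpace ℝ (Fin m))),
        G 0 = F ∧ G k = C ∧ (∀ i < k, G i ⊆ G (i + 1)) ∧
        ∀ i < k, IsExposed ℝ (G (i + 1)) (G i) :=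
  ⟨fun ⟨hF, hFC⟩ => hFC.isPoonem hC hF, fun h => IsPoonem.convex_and_isExtreme h hC⟩

/-- a subset `F` of a convex set `C ⊆ ℝ^m` is a face of `C` (a convex extreme
subset) iff it is a poonem of `C`: there is a chain `F = F_0 ⊆ F_1 ⊆ ⋯ ⊆ F_k = C` where each
`F_{i-1}` is an exposed face of `F_i`. -/
theorem stmt10 {m : ℕ} (C : Set (EuclideanSpace ℝ (Fin m))) (hC : Convex ℝ C)
    (F : Set (EuclideanSpace ℝ (Fin m))) (hFC : F ⊆ C) :
    (Convex ℝ F ∧ IsExtreme ℝ C F) ↔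
      ∃ (k : ℕ) (G : ℕ → Set (EuclideanSpace ℝ (Fin m))),
        G 0 = F ∧ G k = C ∧ (∀ i < k, G i ⊆ G (i + 1)) ∧
        ∀ i < k, IsExposed ℝ (G (i + 1)) (G i) :=
  stmt10_general C hC F
end

section
/- Let K ⊆ ℝ^m be a convex body with 0 in its interior and K° its polar. Then K° has no non-exposed points (every extreme point of K° is exposed) if and only if for every proper normal cone N of K, every extreme ray of N is a normal cone of K at some point of K. -/
/-!
For `z ∈ K`, the normal cone `N_K(z)` is the cone over the face `{u ∈ K° | ⟪u, z⟫ = 1}` of `K°`: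
every nonzero `u ∈ N_K(z)` rescales to `⟪u, z⟫⁻¹ • u` in that face. Through this rescaling the
extreme rays of `N_K(z)` are exactly the rays through extreme points of `K°` lying in the face,
and a point `u` of the face is exposed in `K°` exactly when `N_K(y)` is the ray through `u` for
some `y ∈ K`: a functional exposing `u` is `⟪·, y⟫` up to scaling, and the bipolar theorem puts
the normalised `y` in `K`.
-/

open RealInnerProductSpace

/-- The polar `K° = {u | ⟨u, x⟩ ≤ 1 ∀ x ∈ K}`. -/
def polarSet {m : ℕ} (K : Set (EuclideanSpace ℝ (Fin m))) : Set (EuclideanSpace ℝ (Fin m)) :=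
  {u | ∀ x ∈ K, @inner ℝ _ _ u x ≤ 1}

/-- A ray `{α u | α ≥ 0}`, `u ≠ 0`. -/
def IsRay {m : ℕ} (R : Set (EuclideanSpace ℝ (Fin m))) : Prop :=
  ∃ u : EuclideanSpace ℝ (Fin m), u ≠ 0 ∧ R = {v | ∃ a : ℝ, 0 ≤ a ∧ v = a • u}

section Module

variable {E : Type*} [AddCommGroup E] [Module ℝ E]

-- `IsRay R` unfolds to `∃ u ≠ 0, R = nonnegRay u`.
def nonnegRay (u : E) : Set E :=
  {v | ∃ a : ℝ, 0 ≤ a ∧ v = a • u}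

lemma self_mem_nonnegRay {u : E} : u ∈ nonnegRay u :=
  ⟨1, zero_le_one, (one_smul ℝ u).symm⟩

lemma nonnegRay_smul {u : E} {c : ℝ} (hc : 0 < c) : nonnegRay (c • u) = nonnegRay u := by
  ext v
  constructor
  · rintro ⟨a, ha, rfl⟩
    exact ⟨a * c, by positivity, smul_smul a c u⟩
  · rintro ⟨a, ha, rfl⟩
    exact ⟨a / c, by positivity, by rw [smul_smul, div_mul_cancel₀ a hc.ne']⟩

lemma smul_eq_smul_of_mem_extremePoints {s : Set E} {u y₁ y₂ : E} (hu : u ∈ s.extremePoints ℝ)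
    (hy₁ : y₁ ∈ s) (hy₂ : y₂ ∈ s) {a b : ℝ} (ha : 0 ≤ a) (hb : 0 ≤ b)
    (h : a • y₁ + b • y₂ = (a + b) • u) : a • y₁ = a • u := by
  rcases ha.eq_or_lt with rfl | ha
  · simp
  rcases hb.eq_or_lt with rfl | hb
  · simpa using h
  have hab : 0 < a + b := add_pos ha hb
  have hseg : u ∈ openSegment ℝ y₁ y₂ := by
    refine ⟨a / (a + b), b / (a + b), by positivity, by positivity, by field_simp, ?_⟩
    rw [div_eq_inv_mul, div_eq_inv_mul, ← smul_smul, ← smul_smul, ← smul_add, h, smul_smul,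
      inv_mul_cancel₀ hab.ne', one_smul]
  rw [(mem_extremePoints.mp hu).2 y₁ hy₁ y₂ hy₂ hseg |>.1]

end Module

section InnerProductSpace

variable {F : Type*} [NormedAddCommGroup F] [InnerProductSpace ℝ F]

open Filter Topology in
lemma exists_inner_pos_of_zero_mem_interior {s : Set F} (h0 : (0 : F) ∈ interior s) {u : F}
    (hu : u ≠ 0) : ∃ y ∈ s, 0 < ⟪u, y⟫ := by
  have hsmul : ∀ᶠ t in 𝓝[>] (0 : ℝ), t • u ∈ s := by
    have : Tendsto (fun t : ℝ => t • u) (𝓝 0) (𝓝 0) :=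
      (continuous_id.smul continuous_const).tendsto' 0 0 (zero_smul ℝ u)
    exact (this.mono_left nhdsWithin_le_nhds).eventually (mem_interior_iff_mem_nhds.mp h0)
  obtain ⟨t, hts, ht⟩ := (hsmul.and self_mem_nhdsWithin).exists
  exact ⟨t • u, hts, by rw [real_inner_smul_right]; exact mul_pos ht (real_inner_self_pos.mpr hu)⟩

lemma inner_eq_of_mem_openSegment {x₁ x₂ x z : F} (hx : x ∈ openSegment ℝ x₁ x₂)
    (h₁ : ⟪x₁, z⟫ ≤ ⟪x, z⟫) (h₂ : ⟪x₂, z⟫ ≤ ⟪x, z⟫) : ⟪x₁, z⟫ = ⟪x, z⟫ ∧ ⟪x₂, z⟫ = ⟪x, z⟫ := by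
  obtain ⟨p, q, hp, hq, hpq, rfl⟩ := hx
  simp only [inner_add_left, real_inner_smul_left] at h₁ h₂ ⊢
  obtain rfl : p = 1 - q := by linarith
  have h : ⟪x₁, z⟫ = ⟪x₂, z⟫ := by apply le_antisymm <;> nlinarith
  rw [h]
  constructor <;> ring

lemma eq_of_mem_nonnegRay {u v z : F} (huz : ⟪u, z⟫ = 1) (hv : v ∈ nonnegRay u)
    (hvz : ⟪v, z⟫ = 1) : v = u := by
  obtain ⟨a, -, rfl⟩ := hv
  rw [real_inner_smul_left, huz, mul_one] at hvz
  rw [hvz, one_smul]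

end InnerProductSpace

section Polar

variable {m : ℕ} {K : Set (EuclideanSpace ℝ (Fin m))} {u w y z : EuclideanSpace ℝ (Fin m)}

lemma mem_normalCone_iff : u ∈ normalCone K z ↔ ∀ y ∈ K, ⟪u, y⟫ ≤ ⟪u, z⟫ := by
  simp only [normalCone, Set.mem_ofPred_eq, inner_sub_right, sub_nonpos]

lemma mem_normalCone_of_mem_polarSet (hu : u ∈ polarSet K) (huz : ⟪u, z⟫ = 1) :
    u ∈ normalCone K z :=
  mem_normalCone_iff.mpr fun y hy => huz ▸ hu y hy

lemma nonnegRay_subset_normalCone (hu : u ∈ normalCone K z) : nonnegRay u ⊆ normalCone K z := by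
  rintro _ ⟨a, ha, rfl⟩ y hy
  rw [real_inner_smul_left]
  exact mul_nonpos_of_nonneg_of_nonpos ha (hu y hy)

lemma inner_nonneg_of_mem_normalCone (h0 : 0 ∈ K) (hu : u ∈ normalCone K z) : 0 ≤ ⟪u, z⟫ := by
  simpa using mem_normalCone_iff.mp hu 0 h0

lemma inner_pos_of_mem_normalCone (h0 : 0 ∈ interior K) (hu : u ∈ normalCone K z) (hu0 : u ≠ 0) :
    0 < ⟪u, z⟫ := by
  obtain ⟨y, hy, hpos⟩ := exists_inner_pos_of_zero_mem_interior h0 hu0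
  exact hpos.trans_le (mem_normalCone_iff.mp hu y hy)

lemma zero_mem_polarSet : 0 ∈ polarSet K := fun x _ => by simp

lemma inv_inner_smul_mem_polarSet (hu : u ∈ normalCone K z) (hc : 0 < ⟪u, z⟫) :
    ⟪u, z⟫⁻¹ • u ∈ polarSet K := fun y hy => by
  rw [real_inner_smul_left, inv_mul_le_iff₀ hc, mul_one]
  exact mem_normalCone_iff.mp hu y hy

lemma inner_inv_inner_smul_self (hc : ⟪u, z⟫ ≠ 0) : ⟪⟪u, z⟫⁻¹ • u, z⟫ = 1 := by
  rw [real_inner_smul_left, inv_mul_cancel₀ hc]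

lemma exists_mem_polarSet_nonnegRay_eq (h0 : 0 ∈ interior K) (hw : w ∈ normalCone K z)
    (hw0 : w ≠ 0) : ∃ u ∈ polarSet K, ⟪u, z⟫ = 1 ∧ nonnegRay u = nonnegRay w := by
  have hc := inner_pos_of_mem_normalCone h0 hw hw0
  exact ⟨_, inv_inner_smul_mem_polarSet hw hc, inner_inv_inner_smul_self hc.ne',
    nonnegRay_smul (inv_pos.mpr hc)⟩

lemma normalCone_ne_univ (h0 : 0 ∈ K) (hu : 0 < ⟪u, z⟫) : normalCone K z ≠ Set.univ := by
  intro hN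
  have := inner_nonneg_of_mem_normalCone h0 (hN ▸ Set.mem_univ (-u))
  rw [inner_neg_left] at this
  linarith

lemma exists_mem_polarSet_eq_inner_smul (h0 : 0 ∈ interior K) (hw : w ∈ normalCone K z) :
    ∃ v ∈ polarSet K, w = ⟪w, z⟫ • v := by
  rcases eq_or_ne w 0 with rfl | hw0
  · exact ⟨0, zero_mem_polarSet, by simp⟩
  have hc := inner_pos_of_mem_normalCone h0 hw hw0
  exact ⟨_, inv_inner_smul_mem_polarSet hw hc, by rw [smul_smul, mul_inv_cancel₀ hc.ne', one_smul]⟩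

lemma zero_mem_interior_polarSet (hK : Bornology.IsBounded K) : 0 ∈ interior (polarSet K) := by
  obtain ⟨r, hr, hKr⟩ := hK.subset_closedBall_lt 0 0
  refine mem_interior_iff_mem_nhds.mpr <|
    Metric.mem_nhds_iff.mpr ⟨r⁻¹, inv_pos.mpr hr, fun u hu x hx => ?_⟩
  have hu' : ‖u‖ < r⁻¹ := by simpa using hu
  have hx' : ‖x‖ ≤ r := by simpa using hKr hx
  calc ⟪u, x⟫ ≤ ‖u‖ * ‖x‖ := real_inner_le_norm u x
    _ ≤ r⁻¹ * r := mul_le_mul hu'.le hx' (norm_nonneg _) (by positivity)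
    _ = 1 := inv_mul_cancel₀ hr.ne'

lemma mem_of_forall_inner_le_one (hK : Convex ℝ K) (hKc : IsClosed K) (h0 : 0 ∈ K)
    (hy : ∀ v ∈ polarSet K, ⟪v, y⟫ ≤ 1) : y ∈ K := by
  by_contra hyK
  obtain ⟨f, s, hfs, hsy⟩ := geometric_hahn_banach_closed_point hK hKc hyK
  have hs : 0 < s := by simpa using hfs 0 h0
  set v := (InnerProductSpace.toDual ℝ (EuclideanSpace ℝ (Fin m))).symm f
  have hv : ∀ x, ⟪v, x⟫ = f x := fun x => InnerProductSpace.toDual_symm_apply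
  have hmem : s⁻¹ • v ∈ polarSet K := fun x hx => by
    rw [real_inner_smul_left, hv, inv_mul_le_iff₀ hs, mul_one]
    exact (hfs x hx).le
  have := hy _ hmem
  rw [real_inner_smul_left, hv, inv_mul_le_iff₀ hs, mul_one] at this
  linarith

lemma exists_inner_eq_one_of_mem_extremePoints (h0 : 0 ∈ interior K) (hKc : IsCompact K)
    (hu : u ∈ (polarSet K).extremePoints ℝ) (hu0 : u ≠ 0) : ∃ z ∈ K, ⟪u, z⟫ = 1 := by
  obtain ⟨z, hz, hmax⟩ := hKc.exists_isMaxOn (Set.nonempty_of_mem (interior_subset h0))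
    (continuous_const.inner continuous_id : Continuous fun y => ⟪u, y⟫).continuousOn
  have huN : u ∈ normalCone K z := mem_normalCone_iff.mpr fun y hy => hmax hy
  have hc := inner_pos_of_mem_normalCone h0 huN hu0
  refine ⟨z, hz, (hu.1 z hz).antisymm ?_⟩
  by_contra! hlt
  have hseg : u ∈ openSegment ℝ 0 (⟪u, z⟫⁻¹ • u) :=
    ⟨1 - ⟪u, z⟫, ⟪u, z⟫, by linarith, hc, by ring, by
      rw [smul_zero, zero_add, smul_smul, mul_inv_cancel₀ hc.ne', one_smul]⟩
  exact hu0 ((mem_extremePoints.mp hu).2 0 zero_mem_polarSet _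
    (inv_inner_smul_mem_polarSet huN hc) hseg).1.symm

lemma mem_extremePoints_polarSet_of_isExtreme (hz : z ∈ K) (hu : u ∈ polarSet K)
    (huz : ⟪u, z⟫ = 1) (hR : IsExtreme ℝ (normalCone K z) (nonnegRay u)) :
    u ∈ (polarSet K).extremePoints ℝ := by
  refine mem_extremePoints_iff_left.mpr ⟨hu, fun x₁ hx₁ x₂ hx₂ hseg => ?_⟩
  obtain ⟨h₁, h₂⟩ := inner_eq_of_mem_openSegment hseg (huz ▸ hx₁ z hz) (huz ▸ hx₂ z hz)
  rw [huz] at h₁ h₂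
  have hN₁ := mem_normalCone_of_mem_polarSet hx₁ h₁
  have hN₂ := mem_normalCone_of_mem_polarSet hx₂ h₂
  exact eq_of_mem_nonnegRay huz (hR.2 hN₁ hN₂ self_mem_nonnegRay hseg) h₁

lemma isExtreme_nonnegRay_of_mem_extremePoints (h0 : 0 ∈ interior K)
    (hu : u ∈ (polarSet K).extremePoints ℝ) (huz : ⟪u, z⟫ = 1) :
    IsExtreme ℝ (normalCone K z) (nonnegRay u) := by
  refine ⟨nonnegRay_subset_normalCone (mem_normalCone_of_mem_polarSet hu.1 huz), ?_⟩
  rintro x₁ hx₁ x₂ hx₂ _ ⟨a, -, rfl⟩ ⟨p, q, hp, hq, -, hsum⟩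
  obtain ⟨y₁, hy₁, hxy₁⟩ := exists_mem_polarSet_eq_inner_smul h0 hx₁
  obtain ⟨y₂, hy₂, hxy₂⟩ := exists_mem_polarSet_eq_inner_smul h0 hx₂
  have hc₁ := inner_nonneg_of_mem_normalCone (interior_subset h0) hx₁
  have hc₂ := inner_nonneg_of_mem_normalCone (interior_subset h0) hx₂
  have ha : a = p * ⟪x₁, z⟫ + q * ⟪x₂, z⟫ := by
    simpa [inner_add_left, real_inner_smul_left, huz] using congrArg (⟪·, z⟫) hsum.symm
  have hcomb : (p * ⟪x₁, z⟫) • y₁ + (q * ⟪x₂, z⟫) • y₂ = (p * ⟪x₁, z⟫ + q * ⟪x₂, z⟫) • u := by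
    rw [← ha, ← hsum, mul_smul, mul_smul, ← hxy₁, ← hxy₂]
  have h₁ := smul_eq_smul_of_mem_extremePoints hu hy₁ hy₂ (by positivity) (by positivity) hcomb
  rw [mul_smul, mul_smul, ← hxy₁] at h₁
  exact ⟨_, hc₁, smul_right_injective _ hp.ne' h₁⟩

lemma normalCone_eq_nonnegRay (h0 : 0 ∈ interior K) (hu : u ∈ polarSet K) (huy : ⟪u, y⟫ = 1)
    (huniq : ∀ v ∈ polarSet K, ⟪v, y⟫ = 1 → v = u) : normalCone K y = nonnegRay u := by
  refine (Set.Subset.antisymm (fun w hw => ?_)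
    (nonnegRay_subset_normalCone (mem_normalCone_of_mem_polarSet hu huy)))
  rcases eq_or_ne w 0 with rfl | hw0
  · exact ⟨0, le_rfl, (zero_smul ℝ u).symm⟩
  have hc := inner_pos_of_mem_normalCone h0 hw hw0
  have hwu := huniq _ (inv_inner_smul_mem_polarSet hw hc) (inner_inv_inner_smul_self hc.ne')
  exact ⟨⟪w, y⟫, hc.le, by rw [← hwu, smul_smul, mul_inv_cancel₀ hc.ne', one_smul]⟩

lemma exists_normalCone_eq_nonnegRay_of_isExposed (hK : Convex ℝ K) (hKc : IsClosed K)
    (h0 : 0 ∈ interior K) (hu : u ∈ polarSet K) (hu0 : u ≠ 0)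
    (hexp : IsExposed ℝ (polarSet K) {u}) : ∃ y ∈ K, normalCone K y = nonnegRay u := by
  obtain ⟨l, hl⟩ := hexp ⟨u, rfl⟩
  have hmax : ∀ v ∈ polarSet K, l v ≤ l u := (hl.le rfl).2
  have hargmax : ∀ v ∈ polarSet K, l u ≤ l v → v = u := fun v hv h =>
    hl.ge ⟨hv, fun w hw => (hmax w hw).trans h⟩
  have hc : 0 < l u := by
    by_contra! h
    exact hu0 (hargmax 0 zero_mem_polarSet (by simpa using h)).symm
  set y := (l u)⁻¹ • (InnerProductSpace.toDual ℝ (EuclideanSpace ℝ (Fin m))).symm l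
  have hy : ∀ v, ⟪v, y⟫ = (l u)⁻¹ * l v := fun v => by
    rw [real_inner_smul_right, real_inner_comm, InnerProductSpace.toDual_symm_apply]
  refine ⟨y, mem_of_forall_inner_le_one hK hKc (interior_subset h0) fun v hv => ?_,
    normalCone_eq_nonnegRay h0 hu ?_ fun v hv hvy => ?_⟩
  · rw [hy, inv_mul_le_iff₀ hc, mul_one]
    exact hmax v hv
  · rw [hy, inv_mul_cancel₀ hc.ne']
  · rw [hy, inv_mul_eq_one₀ hc.ne'] at hvy
    exact hargmax v hv hvy.le

lemma isExposed_singleton_of_normalCone_eq_nonnegRay (hz : z ∈ K) (hy : y ∈ K)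
    (hu : u ∈ polarSet K) (huz : ⟪u, z⟫ = 1) (hN : normalCone K y = nonnegRay u) :
    IsExposed ℝ (polarSet K) {u} := by
  have huy : ⟪u, y⟫ = 1 :=
    (hu y hy).antisymm (huz ▸ mem_normalCone_iff.mp (hN ▸ self_mem_nonnegRay) z hz)
  refine fun _ => ⟨InnerProductSpace.toDual ℝ _ y, Set.Subset.antisymm ?_ ?_⟩
  · rintro _ rfl
    refine ⟨hu, fun v hv => ?_⟩
    simp only [InnerProductSpace.toDual_apply_apply, ← real_inner_comm y, huy]
    exact hv y hy
  · rintro v ⟨hv, hvmax⟩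
    have hvy : ⟪v, y⟫ = 1 :=
      (hv y hy).antisymm (by
        simpa only [InnerProductSpace.toDual_apply_apply, ← real_inner_comm y, huy] using hvmax u hu)
    exact eq_of_mem_nonnegRay huy (hN ▸ mem_normalCone_of_mem_polarSet hv hvy) hvy

end Polar

/-- for a convex body `K` with `0` in its interior, the polar `K°` has no
non-exposed points (every extreme point of `K°` is exposed) iff for every proper normal
cone `N` of `K`, every extreme ray of `N` is a normal cone of `K` at some point of `K`. -/
theorem stmt18 {m : ℕ} (K : Set (EuclideanSpace ℝ (Fin m))) (hK : Convex ℝ K)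
    (hcomp : IsCompact K) (h0 : (0 : EuclideanSpace ℝ (Fin m)) ∈ interior K) :
    (∀ x ∈ Set.extremePoints ℝ (polarSet K), IsExposed ℝ (polarSet K) {x}) ↔
      (∀ z ∈ K, normalCone K z ≠ Set.univ → normalCone K z ≠ {0} →
        ∀ R, IsRay R → IsExtreme ℝ (normalCone K z) R →
          ∃ y ∈ K, normalCone K y = R) := by
  constructor
  · rintro hexp z hz - - R ⟨u₀, hu₀, rfl⟩ hR
    change IsExtreme ℝ _ (nonnegRay u₀) at hR
    change ∃ y ∈ K, normalCone K y = nonnegRay u₀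
    obtain ⟨u, hu, huz, hRu⟩ := exists_mem_polarSet_nonnegRay_eq h0 (hR.1 self_mem_nonnegRay) hu₀
    rw [← hRu] at hR ⊢
    have hu0 : u ≠ 0 := by rintro rfl; simp at huz
    exact exists_normalCone_eq_nonnegRay_of_isExposed hK hcomp.isClosed h0 hu hu0
      (hexp u (mem_extremePoints_polarSet_of_isExtreme hz hu huz hR))
  · intro h u hu
    rcases subsingleton_or_nontrivial (EuclideanSpace ℝ (Fin m)) with _ | _
    · have hpolar : polarSet K = {u} := Set.subsingleton_of_subsingleton.eq_singleton_of_mem hu.1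
      exact hpolar ▸ IsExposed.refl _
    have hu0 : u ≠ 0 := fun hu0 => (disjoint_interior_extremePoints _).ne_of_mem
      (zero_mem_interior_polarSet hcomp.isBounded) hu hu0.symm
    obtain ⟨z, hz, huz⟩ := exists_inner_eq_one_of_mem_extremePoints h0 hcomp hu hu0
    have hR := isExtreme_nonnegRay_of_mem_extremePoints h0 hu huz
    have huN : u ∈ normalCone K z := hR.1 self_mem_nonnegRay
    have hN_univ := normalCone_ne_univ (interior_subset h0) (huz ▸ one_pos : 0 < ⟪u, z⟫)
    have hN_zero : normalCone K z ≠ {0} := fun hN => hu0 (by simpa [hN] using huN)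
    obtain ⟨y, hy, hN⟩ := h z hz hN_univ hN_zero _ ⟨u, hu0, rfl⟩ hR
    exact isExposed_singleton_of_normalCone_eq_nonnegRay hz hy hu.1 huz hN
end
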